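/- Let A, B, C, D ∈ ℝ² with no three collinear, and let M be a point lying both on the line through A, C and on the line through B, D (a diagonal point of the quadrangle ABCD). Let ℓ be a line through M containing none of A, B, C, D. Let X be the intersection point of the line through A, B with ℓ and Y the intersection point of the line through C, D with ℓ, and suppose X ≠ Y and M = (X + Y)/2. Then every conic through A, B, C, D meets ℓ either in the empty set, or exactly in {M}, or exactly in a pair of distinct points whose midpoint is M. -/

import Mathlib

/-- A conic (possibly degenerate) in the affine plane `ℝ × ℝ`, given by the six
coefficients of a polynomial `a·x² + b·x·y + c·y² + d·x + e·y + g`. -/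
structure Conic where
  a : ℝ
  b : ℝ
  c : ℝ
  d : ℝ
  e : ℝ
  g : ℝ

/-- Evaluation of the defining polynomial of a conic at a point of `ℝ × ℝ`. -/
def Conic.eval (f : Conic) (p : ℝ × ℝ) : ℝ :=
  f.a * p.1 ^ 2 + f.b * p.1 * p.2 + f.c * p.2 ^ 2 + f.d * p.1 + f.e * p.2 + f.g

/-- The defining polynomial is nonzero. -/
def Conic.Nonzero (f : Conic) : Prop :=
  ¬ (f.a = 0 ∧ f.b = 0 ∧ f.c = 0 ∧ f.d = 0 ∧ f.e = 0 ∧ f.g = 0)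

/-- The conic passes through the four points `A`, `B`, `C`, `D`. -/
def Conic.Through (f : Conic) (A B C D : ℝ × ℝ) : Prop :=
  f.eval A = 0 ∧ f.eval B = 0 ∧ f.eval C = 0 ∧ f.eval D = 0

/-- No three of the four points `A`, `B`, `C`, `D` are collinear. -/
def NoThreeCollinear (A B C D : ℝ × ℝ) : Prop :=
  ¬ Collinear ℝ ({A, B, C} : Set (ℝ × ℝ)) ∧ ¬ Collinear ℝ ({A, B, D} : Set (ℝ × ℝ)) ∧
  ¬ Collinear ℝ ({A, C, D} : Set (ℝ × ℝ)) ∧ ¬ Collinear ℝ ({B, C, D} : Set (ℝ × ℝ))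

/-- The line through `M` with direction `u`. -/
def parmLine (M u : ℝ × ℝ) : Set (ℝ × ℝ) :=
  {p | ∃ t : ℝ, p = M + t • u}

/-!
Parametrise `ℓ` as `t ↦ M + t • u`, so that `X = M + s • u` and `Y = M - s • u`. A conic restricts
to `ℓ` as a quadratic `α t² + β t + γ`, and the claim amounts to `β = 0`, i.e. `f X = f Y`.
The line pair `L = AC ∪ BD` restricts to `ℓ` as `k t²` since both lines pass through `M`, so
`L X = L Y ≠ 0`. The member `H = f - (f X / L X) • L` of the pencil spanned by `f` and `L` vanishes
at `A`, `B`, `X`, hence on the line `AB`; a conic containing a line and two points `C`, `D` off it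
contains the line `CD`, so `H Y = 0`, i.e. `f X / L X = f Y / L Y`. If moreover `α = γ = 0`, then
`f` contains `ℓ`, hence the lines `AB` (through `X`) and `AC` (through `M`), and vanishing at `D`
forces `f = 0`.
-/

def det2 (v w : ℝ × ℝ) : ℝ := v.1 * w.2 - v.2 * w.1

@[simp]
lemma det2_self (v : ℝ × ℝ) : det2 v v = 0 := by
  unfold det2
  ring

@[simp]
lemma zero_det2 (v : ℝ × ℝ) : det2 0 v = 0 := by
  simp [det2]

lemma det2_smul_left (c : ℝ) (v w : ℝ × ℝ) : det2 (c • v) w = c * det2 v w := by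
  simp only [det2, Prod.smul_fst, Prod.smul_snd, smul_eq_mul]
  ring

lemma exists_eq_smul_of_det2_eq_zero {v w : ℝ × ℝ} (hv : v ≠ 0) (h : det2 v w = 0) :
    ∃ c : ℝ, w = c • v := by
  unfold det2 at h
  obtain ⟨v₁, v₂⟩ := v
  obtain ⟨w₁, w₂⟩ := w
  simp only [ne_eq, Prod.mk_eq_zero, not_and_or] at hv h
  rcases hv with hv₁ | hv₂
  · refine ⟨w₁ / v₁, Prod.ext ?_ ?_⟩ <;> simp only [Prod.smul_mk, smul_eq_mul] <;> field_simp
    linear_combination h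
  · refine ⟨w₂ / v₂, Prod.ext ?_ ?_⟩ <;> simp only [Prod.smul_mk, smul_eq_mul] <;> field_simp
    linear_combination -h

lemma exists_eq_add_smul_add_smul {v w : ℝ × ℝ} (h : det2 v w ≠ 0) (P p : ℝ × ℝ) :
    ∃ s t : ℝ, p = P + s • v + t • w := by
  refine ⟨det2 (p - P) w / det2 v w, det2 v (p - P) / det2 v w, Prod.ext ?_ ?_⟩ <;>
    simp only [Prod.fst_add, Prod.snd_add, Prod.smul_fst, Prod.smul_snd, smul_eq_mul] <;>
    field_simp <;> simp only [det2, Prod.fst_sub, Prod.snd_sub] <;> ring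

lemma mem_affineSpan_pair_iff_exists_add_smul {P Q p : ℝ × ℝ} :
    p ∈ line[ℝ, P, Q] ↔ ∃ t : ℝ, p = P + t • (Q - P) := by
  simp only [mem_affineSpan_pair_iff_exists_lineMap_eq, AffineMap.lineMap_apply_module',
    add_comm P, eq_comm]

lemma collinear_of_mem_affineSpan_pair {A B C : ℝ × ℝ} (h : C ∈ line[ℝ, A, B]) :
    Collinear ℝ ({A, B, C} : Set (ℝ × ℝ)) := by
  rw [Set.pair_comm, Set.insert_comm]
  exact collinear_insert_of_mem_affineSpan_pair h

lemma collinear_of_det2_eq_zero {A B C : ℝ × ℝ} (h : det2 (B - A) (C - A) = 0) :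
    Collinear ℝ ({A, B, C} : Set (ℝ × ℝ)) := by
  rcases eq_or_ne (B - A) 0 with hBA | hBA
  · rw [sub_eq_zero.1 hBA, Set.insert_eq_of_mem (Set.mem_insert _ _)]
    exact collinear_pair ℝ A C
  · obtain ⟨c, hc⟩ := exists_eq_smul_of_det2_eq_zero hBA h
    exact collinear_of_mem_affineSpan_pair
      (mem_affineSpan_pair_iff_exists_add_smul.2 ⟨c, by rw [← hc]; abel⟩)

lemma det2_sub_eq_zero_of_mem_affineSpan_pair {P Q p : ℝ × ℝ} (h : p ∈ line[ℝ, P, Q]) :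
    det2 (p - P) (Q - P) = 0 := by
  obtain ⟨t, rfl⟩ := mem_affineSpan_pair_iff_exists_add_smul.1 h
  simp [det2_smul_left]

lemma mem_parmLine_iff {M u : ℝ × ℝ} (hu : u ≠ 0) {P : ℝ × ℝ} :
    P ∈ parmLine M u ↔ det2 (P - M) u = 0 := by
  constructor
  · rintro ⟨t, rfl⟩
    simp [det2_smul_left]
  · intro h
    obtain ⟨t, ht⟩ := exists_eq_smul_of_det2_eq_zero hu (by unfold det2 at h ⊢; linarith)
    exact ⟨t, by rw [← ht]; abel⟩

lemma det2_ne_zero_of_notMem_parmLine {P Q M u : ℝ × ℝ} (hu : u ≠ 0)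
    (hM : M ∈ line[ℝ, P, Q]) (hP : P ∉ parmLine M u) : det2 u (Q - P) ≠ 0 := by
  obtain ⟨t, rfl⟩ := mem_affineSpan_pair_iff_exists_add_smul.1 hM
  rw [mem_parmLine_iff hu] at hP
  intro h
  apply hP
  have : P - (P + t • (Q - P)) = (-t) • (Q - P) := by rw [neg_smul]; abel
  rw [this, det2_smul_left]
  unfold det2 at h ⊢
  linear_combination t * h

lemma setOf_mul_sq_add_eq_zero {a c : ℝ} (h : a ≠ 0 ∨ c ≠ 0) :
    {t : ℝ | a * t ^ 2 + c = 0} = ∅ ∨ {t : ℝ | a * t ^ 2 + c = 0} = {0} ∨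
      ∃ r ≠ 0, {t : ℝ | a * t ^ 2 + c = 0} = {r, -r} := by
  rcases eq_or_ne a 0 with rfl | ha
  · left
    ext t
    simpa using h
  have hroot : ∀ t : ℝ, a * t ^ 2 + c = 0 ↔ t ^ 2 = -c / a := fun t => by
    rw [eq_div_iff ha]; constructor <;> intro h <;> linarith
  simp only [hroot]
  rcases lt_trichotomy (-c / a) 0 with hneg | hzero | hpos
  · left
    ext t
    simpa using (hneg.trans_le (sq_nonneg t)).ne'
  · right; left
    ext t
    simp [hzero]
  · right; right
    refine ⟨√(-c / a), (Real.sqrt_pos.2 hpos).ne', ?_⟩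
    ext t
    simp only [Set.mem_ofPred_eq, Set.mem_insert_iff, Set.mem_singleton_iff,
      ← sq_eq_sq_iff_eq_or_eq_neg, Real.sq_sqrt hpos.le]

namespace Conic

variable (f : Conic)

def quadForm (v : ℝ × ℝ) : ℝ := f.a * v.1 ^ 2 + f.b * v.1 * v.2 + f.c * v.2 ^ 2

def polar (v w : ℝ × ℝ) : ℝ :=
  2 * f.a * v.1 * w.1 + f.b * (v.1 * w.2 + v.2 * w.1) + 2 * f.c * v.2 * w.2

def dirDeriv (P v : ℝ × ℝ) : ℝ := f.polar P v + f.d * v.1 + f.e * v.2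

lemma eval_add_smul (P v : ℝ × ℝ) (t : ℝ) :
    f.eval (P + t • v) = f.quadForm v * t ^ 2 + f.dirDeriv P v * t + f.eval P := by
  simp only [eval, quadForm, dirDeriv, polar, Prod.fst_add, Prod.snd_add, Prod.smul_fst,
    Prod.smul_snd, smul_eq_mul]
  ring

lemma eval_add_smul_add_smul (P v w : ℝ × ℝ) (s t : ℝ) :
    f.eval (P + s • v + t • w) =
      f.eval (P + s • v) + f.eval (P + t • w) - f.eval P + f.polar v w * s * t := by
  simp only [eval, polar, Prod.fst_add, Prod.snd_add, Prod.smul_fst, Prod.smul_snd, smul_eq_mul]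
  ring

lemma quadForm_smul (r : ℝ) (v : ℝ × ℝ) : f.quadForm (r • v) = r ^ 2 * f.quadForm v := by
  simp only [quadForm, Prod.smul_fst, Prod.smul_snd, smul_eq_mul]
  ring

lemma Nonzero.exists_eval_ne_zero {f : Conic} (hf : f.Nonzero) : ∃ p, f.eval p ≠ 0 := by
  by_contra! h
  apply hf
  have h₁ := h (0, 0)
  have h₂ := h (1, 0)
  have h₃ := h (-1, 0)
  have h₄ := h (0, 1)
  have h₅ := h (0, -1)
  have h₆ := h (1, 1)
  simp only [eval] at h₁ h₂ h₃ h₄ h₅ h₆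
  norm_num at h₁ h₂ h₃ h₄ h₅ h₆
  refine ⟨?_, ?_, ?_, ?_, ?_, ?_⟩ <;> linarith

instance : Sub Conic :=
  ⟨fun f g => ⟨f.a - g.a, f.b - g.b, f.c - g.c, f.d - g.d, f.e - g.e, f.g - g.g⟩⟩

instance : SMul ℝ Conic :=
  ⟨fun r f => ⟨r * f.a, r * f.b, r * f.c, r * f.d, r * f.e, r * f.g⟩⟩

@[simp]
lemma eval_sub (g : Conic) (p : ℝ × ℝ) : (f - g).eval p = f.eval p - g.eval p := by
  simp only [eval, HSub.hSub, Sub.sub]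
  ring

@[simp]
lemma eval_smul (r : ℝ) (p : ℝ × ℝ) : (r • f).eval p = r * f.eval p := by
  simp only [eval, HSMul.hSMul, SMul.smul]
  ring

def linePair (P v Q w : ℝ × ℝ) : Conic :=
  ⟨v.2 * w.2, -(v.2 * w.1 + v.1 * w.2), v.1 * w.1, -(v.2 * det2 Q w + w.2 * det2 P v),
    v.1 * det2 Q w + w.1 * det2 P v, det2 P v * det2 Q w⟩

@[simp]
lemma eval_linePair (P v Q w p : ℝ × ℝ) :
    (linePair P v Q w).eval p = det2 (p - P) v * det2 (p - Q) w := by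
  simp only [eval, linePair, det2, Prod.fst_sub, Prod.snd_sub]
  ring

lemma eval_linePair_add_smul {P v Q w M : ℝ × ℝ} (hP : det2 (M - P) v = 0)
    (hQ : det2 (M - Q) w = 0) (u : ℝ × ℝ) (t : ℝ) :
    (linePair P v Q w).eval (M + t • u) = det2 u v * det2 u w * t ^ 2 := by
  have h_add_smul : ∀ R x, det2 (M + t • u - R) x = det2 (M - R) x + t * det2 u x := by
    intro R x
    simp only [det2, Prod.fst_add, Prod.snd_add, Prod.fst_sub, Prod.snd_sub, Prod.smul_fst,
      Prod.smul_snd, smul_eq_mul]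
    ring
  rw [eval_linePair, h_add_smul, h_add_smul, hP, hQ]
  ring

def VanishesOn (s : Set (ℝ × ℝ)) : Prop := ∀ p ∈ s, f.eval p = 0

lemma vanishesOn_line_iff {P Q : ℝ × ℝ} : f.VanishesOn line[ℝ, P, Q] ↔
    f.quadForm (Q - P) = 0 ∧ f.dirDeriv P (Q - P) = 0 ∧ f.eval P = 0 := by
  constructor
  · intro h
    have hp (t : ℝ) : f.quadForm (Q - P) * t ^ 2 + f.dirDeriv P (Q - P) * t + f.eval P = 0 := by
      rw [← eval_add_smul]
      exact h _ (mem_affineSpan_pair_iff_exists_add_smul.2 ⟨t, rfl⟩)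
    have h₀ := hp 0
    have h₁ := hp 1
    have h₂ := hp (-1)
    refine ⟨?_, ?_, ?_⟩
    · linear_combination (h₁ + h₂) / 2 - h₀
    · linear_combination (h₁ - h₂) / 2
    · linear_combination h₀
  · rintro ⟨hq, hd, hP⟩ p hp
    obtain ⟨t, rfl⟩ := mem_affineSpan_pair_iff_exists_add_smul.1 hp
    simp [eval_add_smul, hq, hd, hP]

lemma vanishesOn_line_of_three_zeros {P Q R : ℝ × ℝ} (hP : f.eval P = 0) (hQ : f.eval Q = 0)
    (hR : R ∈ line[ℝ, P, Q]) (hRP : R ≠ P) (hRQ : R ≠ Q) (hR₀ : f.eval R = 0) :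
    f.VanishesOn line[ℝ, P, Q] := by
  obtain ⟨t, rfl⟩ := mem_affineSpan_pair_iff_exists_add_smul.1 hR
  have ht₀ : t ≠ 0 := by rintro rfl; simp at hRP
  have ht₁ : t ≠ 1 := by rintro rfl; simp at hRQ
  have hQ' := f.eval_add_smul P (Q - P) 1
  rw [f.eval_add_smul, hP] at hR₀
  rw [one_smul, add_sub_cancel, hP, hQ] at hQ'
  have hq : f.quadForm (Q - P) * (t * (t - 1)) = 0 := by linear_combination hR₀ + t * hQ'
  have hq₀ : f.quadForm (Q - P) = 0 :=
    (mul_eq_zero.1 hq).resolve_right (mul_ne_zero ht₀ (sub_ne_zero.2 ht₁))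
  exact f.vanishesOn_line_iff.2 ⟨hq₀, by linear_combination -hQ' - hq₀, hP⟩

lemma VanishesOn.vanishesOn_line {f : Conic} {A B C D : ℝ × ℝ} (h : f.VanishesOn line[ℝ, A, B])
    (hABC : ¬Collinear ℝ {A, B, C}) (hABD : ¬Collinear ℝ {A, B, D})
    (hC : f.eval C = 0) (hD : f.eval D = 0) : f.VanishesOn line[ℝ, C, D] := by
  by_cases hpar : det2 (B - A) (D - C) = 0
  · obtain ⟨r, hr⟩ := exists_eq_smul_of_det2_eq_zero
      (sub_ne_zero.2 (ne₁₂_of_not_collinear hABC).symm) hpar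
    have hq : f.quadForm (D - C) = 0 := by
      rw [hr, quadForm_smul, (f.vanishesOn_line_iff.1 h).1, mul_zero]
    have hD' := f.eval_add_smul C (D - C) 1
    rw [one_smul, add_sub_cancel, hD, hC, hq] at hD'
    exact f.vanishesOn_line_iff.2 ⟨hq, by linear_combination -hD', hC⟩
  · obtain ⟨s, t, hst⟩ := exists_eq_add_smul_add_smul hpar A C
    have hZ : A + s • (B - A) = C + (-t) • (D - C) := by
      rw [neg_smul, ← sub_eq_add_neg]
      exact eq_sub_iff_add_eq.2 hst.symm
    have hZAB : A + s • (B - A) ∈ line[ℝ, A, B] :=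
      mem_affineSpan_pair_iff_exists_add_smul.2 ⟨s, rfl⟩
    have hZCD : A + s • (B - A) ∈ line[ℝ, C, D] :=
      mem_affineSpan_pair_iff_exists_add_smul.2 ⟨-t, hZ⟩
    refine f.vanishesOn_line_of_three_zeros hC hD hZCD ?_ ?_ (h _ hZAB)
    · rintro hZC
      exact hABC (collinear_of_mem_affineSpan_pair (hZC ▸ hZAB))
    · rintro hZD
      exact hABD (collinear_of_mem_affineSpan_pair (hZD ▸ hZAB))

lemma eval_eq_zero_of_vanishesOn_two_lines {f : Conic} {A B C D : ℝ × ℝ}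
    (hAB : f.VanishesOn line[ℝ, A, B]) (hAC : f.VanishesOn line[ℝ, A, C]) (hD : f.eval D = 0)
    (hABC : ¬Collinear ℝ {A, B, C}) (hABD : ¬Collinear ℝ {A, B, D})
    (hACD : ¬Collinear ℝ {A, C, D}) (p : ℝ × ℝ) : f.eval p = 0 := by
  have hδ : det2 (B - A) (C - A) ≠ 0 := fun h => hABC (collinear_of_det2_eq_zero h)
  have hsplit (s t : ℝ) :
      f.eval (A + s • (B - A) + t • (C - A)) = f.polar (B - A) (C - A) * s * t := by
    rw [eval_add_smul_add_smul, hAB _ (mem_affineSpan_pair_iff_exists_add_smul.2 ⟨s, rfl⟩),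
      hAC _ (mem_affineSpan_pair_iff_exists_add_smul.2 ⟨t, rfl⟩),
      hAB _ (left_mem_affineSpan_pair ℝ A B)]
    ring
  obtain ⟨s, t, rfl⟩ := exists_eq_add_smul_add_smul hδ A D
  have hs : s ≠ 0 := by
    rintro rfl
    exact hACD (collinear_of_mem_affineSpan_pair
      (mem_affineSpan_pair_iff_exists_add_smul.2 ⟨t, by simp⟩))
  have ht : t ≠ 0 := by
    rintro rfl
    exact hABD (collinear_of_mem_affineSpan_pair
      (mem_affineSpan_pair_iff_exists_add_smul.2 ⟨s, by simp⟩))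
  have hpolar : f.polar (B - A) (C - A) = 0 := by
    rw [hsplit] at hD
    simpa [hs, ht] using hD
  obtain ⟨s', t', rfl⟩ := exists_eq_add_smul_add_smul hδ A p
  rw [hsplit, hpolar, zero_mul, zero_mul]

lemma Through.eval_mul_eval_linePair_comm {f : Conic} {A B C D X Y : ℝ × ℝ}
    (hf : f.Through A B C D) (hABC : ¬Collinear ℝ {A, B, C}) (hABD : ¬Collinear ℝ {A, B, D})
    (hX : X ∈ line[ℝ, A, B]) (hY : Y ∈ line[ℝ, C, D])
    (hLX : (linePair A (C - A) B (D - B)).eval X ≠ 0) :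
    f.eval X * (linePair A (C - A) B (D - B)).eval Y =
      f.eval Y * (linePair A (C - A) B (D - B)).eval X := by
  obtain ⟨hA, hB, hC, hD⟩ := hf
  set L := linePair A (C - A) B (D - B)
  set H := f - (f.eval X / L.eval X) • L
  have hH {P : ℝ × ℝ} (hfP : f.eval P = 0) (hLP : L.eval P = 0) : H.eval P = 0 := by
    simp [H, hfP, hLP]
  have hLA : L.eval A = 0 := by simp [L]
  have hLB : L.eval B = 0 := by simp [L]
  have hHX : H.eval X = 0 := by simp [H, div_mul_cancel₀ _ hLX]
  have hHAB := H.vanishesOn_line_of_three_zeros (hH hA hLA) (hH hB hLB) hX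
    (fun h => hLX (h ▸ hLA)) (fun h => hLX (h ▸ hLB)) hHX
  have hHY := hHAB.vanishesOn_line hABC hABD (hH hC (by simp [L])) (hH hD (by simp [L])) Y hY
  simp only [H, eval_sub, eval_smul] at hHY
  field_simp at hHY
  linear_combination -hHY

lemma setOf_mem_parmLine_eval_eq_zero {f : Conic} {M u : ℝ × ℝ} (hu : u ≠ 0)
    (hβ : f.dirDeriv M u = 0) (hf : f.quadForm u ≠ 0 ∨ f.eval M ≠ 0) :
    {p ∈ parmLine M u | f.eval p = 0} = ∅ ∨ {p ∈ parmLine M u | f.eval p = 0} = {M} ∨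
      ∃ X' Y' : ℝ × ℝ, X' ≠ Y' ∧ M = midpoint ℝ X' Y' ∧
        {p ∈ parmLine M u | f.eval p = 0} = {X', Y'} := by
  have hS : {p ∈ parmLine M u | f.eval p = 0} =
      (fun t : ℝ => M + t • u) '' {t | f.quadForm u * t ^ 2 + f.eval M = 0} := by
    ext p
    simp only [parmLine, Set.mem_ofPred_eq, Set.mem_image]
    constructor
    · rintro ⟨⟨t, rfl⟩, hp⟩
      exact ⟨t, by simpa [eval_add_smul, hβ] using hp, rfl⟩
    · rintro ⟨t, ht, rfl⟩
      exact ⟨⟨t, rfl⟩, by simpa [eval_add_smul, hβ] using ht⟩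
  have hinj : Function.Injective (fun t : ℝ => M + t • u) :=
    (add_right_injective M).comp (smul_left_injective ℝ hu)
  rw [hS]
  rcases setOf_mul_sq_add_eq_zero hf with h | h | ⟨r, hr, h⟩ <;> rw [h]
  · exact Or.inl (Set.image_empty _)
  · exact Or.inr (Or.inl (by simp))
  · refine Or.inr (Or.inr ⟨M + r • u, M + (-r) • u, hinj.ne fun h => hr (by linarith), ?_,
      by simp [Set.image_insert_eq]⟩)
    rw [midpoint_eq_smul_add, invOf_eq_inv]
    module

end Conic

theorem diagonal_point_butterfly_general
    (A B C D : ℝ × ℝ) (hgen : NoThreeCollinear A B C D)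
    (M : ℝ × ℝ)
    (hMAC : M ∈ affineSpan ℝ ({A, C} : Set (ℝ × ℝ)))
    (hMBD : M ∈ affineSpan ℝ ({B, D} : Set (ℝ × ℝ)))
    (u : ℝ × ℝ) (hu : u ≠ 0)
    (hAl : A ∉ parmLine M u) (hBl : B ∉ parmLine M u)
    (hCl : C ∉ parmLine M u)
    (X Y : ℝ × ℝ)
    (hXAB : X ∈ affineSpan ℝ ({A, B} : Set (ℝ × ℝ))) (hXl : X ∈ parmLine M u)
    (hYCD : Y ∈ affineSpan ℝ ({C, D} : Set (ℝ × ℝ)))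
    (hXY : X ≠ Y) (hmid : M = midpoint ℝ X Y) :
    ∀ f : Conic, f.Nonzero → f.Through A B C D →
      {p ∈ parmLine M u | f.eval p = 0} = ∅ ∨
      {p ∈ parmLine M u | f.eval p = 0} = {M} ∨
      ∃ X' Y' : ℝ × ℝ, X' ≠ Y' ∧ M = midpoint ℝ X' Y' ∧
        {p ∈ parmLine M u | f.eval p = 0} = {X', Y'} := by
  intro f hf hfABCD
  obtain ⟨hABC, hABD, hACD, -⟩ := hgen
  have ⟨hA, hB, hC, hD⟩ := hfABCD
  obtain ⟨s, rfl⟩ := hXl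
  obtain rfl : Y = M + (-s) • u := by
    rw [← midpoint_eq_iff.1 hmid.symm, AffineEquiv.pointReflection_apply]
    simp only [vsub_eq_sub, vadd_eq_add]
    module
  have hs : s ≠ 0 := by
    rintro rfl
    simp at hXY
  have hL := Conic.eval_linePair_add_smul (det2_sub_eq_zero_of_mem_affineSpan_pair hMAC)
    (det2_sub_eq_zero_of_mem_affineSpan_pair hMBD) u
  have hLX : (Conic.linePair A (C - A) B (D - B)).eval (M + s • u) ≠ 0 := by
    rw [hL]
    exact mul_ne_zero (mul_ne_zero (det2_ne_zero_of_notMem_parmLine hu hMAC hAl)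
      (det2_ne_zero_of_notMem_parmLine hu hMBD hBl)) (pow_ne_zero 2 hs)
  have hfXY : f.eval (M + s • u) = f.eval (M + (-s) • u) := by
    have h := hfABCD.eval_mul_eval_linePair_comm hABC hABD hXAB hYCD hLX
    rw [hL, hL, neg_sq, ← hL] at h
    exact mul_right_cancel₀ hLX h
  have hβ : f.dirDeriv M u = 0 := by
    rw [Conic.eval_add_smul, Conic.eval_add_smul] at hfXY
    have h : f.dirDeriv M u * (2 * s) = 0 := by linear_combination hfXY
    exact (mul_eq_zero.1 h).resolve_right (mul_ne_zero two_ne_zero hs)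
  refine Conic.setOf_mem_parmLine_eval_eq_zero hu hβ ?_
  by_contra! hαγ
  have hℓ (t : ℝ) : f.eval (M + t • u) = 0 := by simp [Conic.eval_add_smul, hαγ.1, hαγ.2, hβ]
  have hfAB := f.vanishesOn_line_of_three_zeros hA hB hXAB
    (fun h => hAl (h ▸ ⟨s, rfl⟩)) (fun h => hBl (h ▸ ⟨s, rfl⟩)) (hℓ s)
  have hfAC := f.vanishesOn_line_of_three_zeros hA hC hMAC
    (fun h => hAl (h ▸ ⟨0, by simp⟩)) (fun h => hCl (h ▸ ⟨0, by simp⟩)) (by simpa using hℓ 0)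
  obtain ⟨p, hp⟩ := hf.exists_eval_ne_zero
  exact hp (Conic.eval_eq_zero_of_vanishesOn_two_lines hfAB hfAC hD hABC hABD hACD p)

/-- **The diagonal-point butterfly configuration.** Let `M` be a diagonal point of
the quadrangle `ABCD` (on both lines `AC` and `BD`) and let `ℓ` be a line through
`M` avoiding the four base points such that the opposite sides `AB` and `CD` cut
`ℓ` in two points `X ≠ Y` symmetric about `M`. Then every conic through the four
base points meets `ℓ` either not at all, or exactly at `M`, or exactly in a pair
of distinct points whose midpoint is `M`. -/
theorem diagonal_point_butterfly
    (A B C D : ℝ × ℝ) (hgen : NoThreeCollinear A B C D)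
    (M : ℝ × ℝ)
    (hMAC : M ∈ affineSpan ℝ ({A, C} : Set (ℝ × ℝ)))
    (hMBD : M ∈ affineSpan ℝ ({B, D} : Set (ℝ × ℝ)))
    (u : ℝ × ℝ) (hu : u ≠ 0)
    (hAl : A ∉ parmLine M u) (hBl : B ∉ parmLine M u)
    (hCl : C ∉ parmLine M u) (hDl : D ∉ parmLine M u)
    (X Y : ℝ × ℝ)
    (hXAB : X ∈ affineSpan ℝ ({A, B} : Set (ℝ × ℝ))) (hXl : X ∈ parmLine M u)
    (hYCD : Y ∈ affineSpan ℝ ({C, D} : Set (ℝ × ℝ))) (hYl : Y ∈ parmLine M u)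
    (hXY : X ≠ Y) (hmid : M = midpoint ℝ X Y) :
    ∀ f : Conic, f.Nonzero → f.Through A B C D →
      {p ∈ parmLine M u | f.eval p = 0} = ∅ ∨
      {p ∈ parmLine M u | f.eval p = 0} = {M} ∨
      ∃ X' Y' : ℝ × ℝ, X' ≠ Y' ∧ M = midpoint ℝ X' Y' ∧
        {p ∈ parmLine M u | f.eval p = 0} = {X', Y'} :=
  diagonal_point_butterfly_general A B C D hgen M hMAC hMBD u hu hAl hBl hCl X Y hXAB hXl hYCD hXY
    hmid
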